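/- arXiv:2108.11125 — 4 statements merged into one kernel-verified Lean document; each statement's English description precedes it below -/
import Mathlib

section
/- Suppose the sequence (x^k, λ^k) is generated by P-ALM, i.e., x^{k+1} ∈ X minimizes x ↦ θ(x) − ⟨λ^k, Ax − b⟩ + (r/2)‖A(x − x^k)‖² + (1/2)⟨x − x^k, Q(x − x^k)⟩ over X and λ^{k+1} = λ^k − r(A(2x^{k+1} − x^k) − b). Then for every k, w^{k+1} = (x^{k+1}, λ^{k+1}) ∈ M and for all w ∈ M: θ(x) − θ(x^{k+1}) + ⟨w − w^{k+1}, J(w)⟩ ≥ ⟨w − w^{k+1}, H(w^k − w^{k+1})⟩. -/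
open Matrix Finset

noncomputable section

/-- The bilinear form `(w₁, w₂) ↦ ⟨w₁, H w₂⟩` of the P-ALM matrix
`H = [[rAᵀA + Q, Aᵀ], [A, (1/r)I]]` on `ℝⁿ × ℝᵐ`. -/
def Hbil {n m : ℕ} (A : Matrix (Fin m) (Fin n) ℝ) (Q : Matrix (Fin n) (Fin n) ℝ) (r : ℝ)
    (w₁ w₂ : (Fin n → ℝ) × (Fin m → ℝ)) : ℝ :=
  w₁.1 ⬝ᵥ ((r • (Aᵀ * A) + Q) *ᵥ w₂.1) + w₁.1 ⬝ᵥ (Aᵀ *ᵥ w₂.2) + w₁.2 ⬝ᵥ (A *ᵥ w₂.1)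
    + 1 / r * (w₁.2 ⬝ᵥ w₂.2)

/-- The squared `H`-weighted norm `‖w‖²_H = ⟨w, Hw⟩`. -/
def HnormSq {n m : ℕ} (A : Matrix (Fin m) (Fin n) ℝ) (Q : Matrix (Fin n) (Fin n) ℝ) (r : ℝ)
    (w : (Fin n → ℝ) × (Fin m → ℝ)) : ℝ := Hbil A Q r w w

/-- The affine map `J(x, λ) = (−Aᵀλ, Ax − b)`. -/
def Jmap {n m : ℕ} (A : Matrix (Fin m) (Fin n) ℝ) (b : Fin m → ℝ)
    (w : (Fin n → ℝ) × (Fin m → ℝ)) : (Fin n → ℝ) × (Fin m → ℝ) :=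
  (-(Aᵀ *ᵥ w.2), A *ᵥ w.1 - b)

/-- The Euclidean inner product on `ℝⁿ × ℝᵐ`. -/
def pdot {n m : ℕ} (w₁ w₂ : (Fin n → ℝ) × (Fin m → ℝ)) : ℝ := w₁.1 ⬝ᵥ w₂.1 + w₁.2 ⬝ᵥ w₂.2

/-- `w* = (x*, λ*)` belongs to the solution set `M*` of `VI(θ, J, M)`, `M = X × ℝᵐ`:
`w*.1 ∈ X` and `θ(x) − θ(x*) + ⟨w − w*, J(w*)⟩ ≥ 0` for all `w ∈ M`. -/
def SolPoint {n m : ℕ} (θ : (Fin n → ℝ) → ℝ) (X : Set (Fin n → ℝ))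
    (A : Matrix (Fin m) (Fin n) ℝ) (b : Fin m → ℝ) (ws : (Fin n → ℝ) × (Fin m → ℝ)) : Prop :=
  ws.1 ∈ X ∧ ∀ w : (Fin n → ℝ) × (Fin m → ℝ), w.1 ∈ X →
    θ w.1 - θ ws.1 + pdot (w - ws) (Jmap A b ws) ≥ 0

/-- The P-ALM iteration: `x^{k+1} ∈ X` minimizes
`x ↦ θ(x) − ⟨λᵏ, Ax − b⟩ + (r/2)‖A(x − xᵏ)‖² + (1/2)⟨x − xᵏ, Q(x − xᵏ)⟩` over `X`, and
`λ^{k+1} = λᵏ − r(A(2x^{k+1} − xᵏ) − b)`. -/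
def PALM {n m : ℕ} (θ : (Fin n → ℝ) → ℝ) (X : Set (Fin n → ℝ))
    (A : Matrix (Fin m) (Fin n) ℝ) (b : Fin m → ℝ) (r : ℝ) (Q : Matrix (Fin n) (Fin n) ℝ)
    (x : ℕ → Fin n → ℝ) (lam : ℕ → Fin m → ℝ) : Prop :=
  (∀ k : ℕ, x (k + 1) ∈ X ∧ ∀ z ∈ X,
      θ (x (k + 1)) - lam k ⬝ᵥ (A *ᵥ x (k + 1) - b)
          + r / 2 * ((A *ᵥ (x (k + 1) - x k)) ⬝ᵥ (A *ᵥ (x (k + 1) - x k)))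
          + 1 / 2 * ((x (k + 1) - x k) ⬝ᵥ (Q *ᵥ (x (k + 1) - x k)))
        ≤ θ z - lam k ⬝ᵥ (A *ᵥ z - b)
          + r / 2 * ((A *ᵥ (z - x k)) ⬝ᵥ (A *ᵥ (z - x k)))
          + 1 / 2 * ((z - x k) ⬝ᵥ (Q *ᵥ (z - x k)))) ∧
  (∀ k : ℕ, lam (k + 1) = lam k - r • (A *ᵥ ((2 : ℝ) • x (k + 1) - x k) - b))

/-!
The `x`-update minimises `θ` plus a quadratic over the convex set `X`; comparing with the points
`xᵏ⁺¹ + t (z − xᵏ⁺¹)` and letting `t → 0` gives the first-order condition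
`θ z − θ xᵏ⁺¹ − ⟨λᵏ, A (z − xᵏ⁺¹)⟩ + ⟨z − xᵏ⁺¹, (r AᵀA + Q)(xᵏ⁺¹ − xᵏ)⟩ ≥ 0` for `z ∈ X`.
The rest is an identity: the multiplier update says `(λᵏ − λᵏ⁺¹) / r = A (2xᵏ⁺¹ − xᵏ) − b`, and
the linear part of `J` is skew, so `⟨w − wᵏ⁺¹, J w⟩ = ⟨w − wᵏ⁺¹, J wᵏ⁺¹⟩`; with these, the two
sides of the claimed inequality differ exactly by the left-hand side of the first-order condition.
-/

lemma nonneg_of_forall_mul_add_sq_mul_nonneg {a c : ℝ}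
    (h : ∀ t : ℝ, 0 < t → t ≤ 1 → 0 ≤ t * a + t ^ 2 * c) : 0 ≤ a := by
  by_contra! ha
  obtain ⟨t, ht₀, ht₁, hta⟩ : ∃ t : ℝ, 0 < t ∧ t ≤ 1 ∧ t * c < -a := by
    rcases le_or_gt c 0 with hc | hc
    · exact ⟨1, one_pos, le_rfl, by linarith⟩
    · refine ⟨min 1 (-a / (2 * c)), lt_min one_pos (div_pos (by linarith) (by linarith)),
        min_le_left _ _, ?_⟩
      calc min 1 (-a / (2 * c)) * c ≤ -a / (2 * c) * c := by gcongr; exact min_le_right _ _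
        _ = -a / 2 := by field_simp
        _ < -a := by linarith
  nlinarith [h t ht₀ ht₁]

theorem ConvexOn.le_add_of_isMinOn_add {E : Type*} [AddCommGroup E] [Module ℝ E]
    {X : Set E} {f g : E → ℝ} {p : E} (hf : ConvexOn ℝ X f) (hp : p ∈ X)
    (hmin : IsMinOn (f + g) X p) {a c : E → ℝ}
    (hg : ∀ z t, g (p + t • (z - p)) = g p + t * a z + t ^ 2 * c z) {z : E} (hz : z ∈ X) :
    f p ≤ f z + a z := by
  suffices 0 ≤ f z - f p + a z by linarith
  refine nonneg_of_forall_mul_add_sq_mul_nonneg (c := c z) fun t ht₀ ht₁ => ?_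
  have hseg : (1 - t) • p + t • z = p + t • (z - p) := by module
  have hconv : f (p + t • (z - p)) ≤ (1 - t) * f p + t * f z := by
    simpa only [hseg, smul_eq_mul] using hf.2 hp hz (show 0 ≤ 1 - t by linarith) ht₀.le (by ring)
  have hle := isMinOn_iff.1 hmin _ (hf.1.add_smul_sub_mem hp hz ⟨ht₀.le, ht₁⟩)
  simp only [Pi.add_apply, hg] at hle
  nlinarith

theorem Matrix.IsSymm.dotProduct_mulVec_add_smul {ι R : Type*} [Fintype ι] [CommRing R]
    {D : Matrix ι ι R} (hD : D.IsSymm) (u d : ι → R) (t : R) :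
    (u + t • d) ⬝ᵥ D *ᵥ (u + t • d) =
      u ⬝ᵥ D *ᵥ u + 2 * t * (d ⬝ᵥ D *ᵥ u) + t ^ 2 * (d ⬝ᵥ D *ᵥ d) := by
  have hsymm : u ⬝ᵥ D *ᵥ d = d ⬝ᵥ D *ᵥ u := by
    rw [← dotProduct_transpose_mulVec, hD.eq]
  simp only [mulVec_add, mulVec_smul, dotProduct_add, add_dotProduct, dotProduct_smul,
    smul_dotProduct, smul_eq_mul, hsymm]
  ring

section PALM

variable {n m : ℕ} (A : Matrix (Fin m) (Fin n) ℝ) (b : Fin m → ℝ) (r : ℝ)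
  (Q : Matrix (Fin n) (Fin n) ℝ)

def palmPenalty (lam : Fin m → ℝ) (xk z : Fin n → ℝ) : ℝ :=
  -(lam ⬝ᵥ (A *ᵥ z - b)) + r / 2 * ((A *ᵥ (z - xk)) ⬝ᵥ (A *ᵥ (z - xk)))
    + 1 / 2 * ((z - xk) ⬝ᵥ (Q *ᵥ (z - xk)))

lemma palmPenalty_eq (lam : Fin m → ℝ) (xk z : Fin n → ℝ) :
    palmPenalty A b r Q lam xk z
      = -(lam ⬝ᵥ (A *ᵥ z - b)) + 1 / 2 * ((z - xk) ⬝ᵥ ((r • (Aᵀ * A) + Q) *ᵥ (z - xk))) := by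
  rw [palmPenalty, add_assoc, add_mulVec, smul_mulVec, ← mulVec_mulVec, dotProduct_add,
    dotProduct_smul, dotProduct_transpose_mulVec, dotProduct_comm (A *ᵥ _), smul_eq_mul]
  ring

lemma palmPenalty_add_smul (hQ : Q.IsSymm) (lam : Fin m → ℝ) (xk p d : Fin n → ℝ) (t : ℝ) :
    palmPenalty A b r Q lam xk (p + t • d) = palmPenalty A b r Q lam xk p
      + t * (-(lam ⬝ᵥ (A *ᵥ d)) + d ⬝ᵥ ((r • (Aᵀ * A) + Q) *ᵥ (p - xk)))
      + t ^ 2 * (1 / 2 * (d ⬝ᵥ ((r • (Aᵀ * A) + Q) *ᵥ d))) := by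
  have hD : (r • (Aᵀ * A) + Q).IsSymm := by
    rw [IsSymm, transpose_add, transpose_smul, transpose_mul, transpose_transpose, hQ.eq]
  have hshift : p + t • d - xk = (p - xk) + t • d := by abel
  rw [palmPenalty_eq, palmPenalty_eq, hshift, hD.dotProduct_mulVec_add_smul, mulVec_add,
    mulVec_smul, add_sub_right_comm, dotProduct_add, dotProduct_smul, smul_eq_mul]
  ring

lemma pdot_Jmap_sub_Hbil_eq {p : Fin n → ℝ} {lam lam' : Fin m → ℝ} {xk : Fin n → ℝ}
    (hr : r ≠ 0) (hlam : lam' = lam - r • (A *ᵥ ((2 : ℝ) • p - xk) - b))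
    (w : (Fin n → ℝ) × (Fin m → ℝ)) :
    pdot (w - (p, lam')) (Jmap A b w) - Hbil A Q r (w - (p, lam')) ((xk, lam) - (p, lam'))
      = -(lam ⬝ᵥ (A *ᵥ (w.1 - p))) + (w.1 - p) ⬝ᵥ ((r • (Aᵀ * A) + Q) *ᵥ (p - xk)) := by
  subst hlam
  simp only [pdot, Jmap, Hbil, Prod.fst_sub, Prod.snd_sub, dotProduct_transpose_mulVec,
    add_mulVec, smul_mulVec, ← mulVec_mulVec, mulVec_sub, mulVec_smul, dotProduct_add,
    dotProduct_sub, dotProduct_smul, dotProduct_neg, smul_eq_mul, dotProduct_comm]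
  field_simp
  ring

end PALM

theorem stmt_4_general (n m : ℕ) (θ : (Fin n → ℝ) → ℝ) (hθ : ConvexOn ℝ Set.univ θ)
    (X : Set (Fin n → ℝ)) (hXconvex : Convex ℝ X)
    (A : Matrix (Fin m) (Fin n) ℝ) (b : Fin m → ℝ) (r : ℝ) (hr : 0 < r)
    (Q : Matrix (Fin n) (Fin n) ℝ) (hQ : Q.PosDef)
    (x : ℕ → Fin n → ℝ) (lam : ℕ → Fin m → ℝ) (halg : PALM θ X A b r Q x lam) :
    ∀ k : ℕ, x (k + 1) ∈ X ∧
      ∀ w : (Fin n → ℝ) × (Fin m → ℝ), w.1 ∈ X →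
        θ w.1 - θ (x (k + 1)) + pdot (w - (x (k + 1), lam (k + 1))) (Jmap A b w) ≥
          Hbil A Q r (w - (x (k + 1), lam (k + 1))) ((x k, lam k) - (x (k + 1), lam (k + 1))) := by
  intro k
  obtain ⟨hxX, hmin⟩ := halg.1 k
  refine ⟨hxX, fun w hw => ?_⟩
  have hsubproblem : IsMinOn (θ + palmPenalty A b r Q (lam k) (x k)) X (x (k + 1)) :=
    isMinOn_iff.2 fun z hz => by
      simp only [Pi.add_apply, palmPenalty]
      linarith [hmin z hz]
  have hopt := (hθ.subset (Set.subset_univ X) hXconvex).le_add_of_isMinOn_add hxX hsubproblem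
    (fun z => palmPenalty_add_smul A b r Q (isHermitian_iff_isSymm.1 hQ.isHermitian) _ _ _
      (z - x (k + 1))) hw
  have hgap := pdot_Jmap_sub_Hbil_eq A b r Q hr.ne' (halg.2 k) w
  linarith

/-- Lemma 2.2, first part. -/
theorem stmt_4 (n m : ℕ) (θ : (Fin n → ℝ) → ℝ) (hθ : ConvexOn ℝ Set.univ θ)
    (X : Set (Fin n → ℝ)) (hXne : X.Nonempty) (hXclosed : IsClosed X) (hXconvex : Convex ℝ X)
    (A : Matrix (Fin m) (Fin n) ℝ) (b : Fin m → ℝ) (r : ℝ) (hr : 0 < r)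
    (Q : Matrix (Fin n) (Fin n) ℝ) (hQ : Q.PosDef)
    (x : ℕ → Fin n → ℝ) (lam : ℕ → Fin m → ℝ) (halg : PALM θ X A b r Q x lam) :
    ∀ k : ℕ, x (k + 1) ∈ X ∧
      ∀ w : (Fin n → ℝ) × (Fin m → ℝ), w.1 ∈ X →
        θ w.1 - θ (x (k + 1)) + pdot (w - (x (k + 1), lam (k + 1))) (Jmap A b w) ≥
          Hbil A Q r (w - (x (k + 1), lam (k + 1))) ((x k, lam k) - (x (k + 1), lam (k + 1))) :=
  stmt_4_general n m θ hθ X hXconvex A b r hr Q hQ x lam halg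
end
end

section
/- Suppose the solution set M* is nonempty and the sequence (x^k, λ^k) is generated by P-ALM, i.e., x^{k+1} ∈ X minimizes x ↦ θ(x) − ⟨λ^k, Ax − b⟩ + (r/2)‖A(x − x^k)‖² + (1/2)⟨x − x^k, Q(x − x^k)⟩ over X and λ^{k+1} = λ^k − r(A(2x^{k+1} − x^k) − b), and additionally that θ is continuous on X. Then there exists a point w^∞ ∈ M* such that the sequence w^k = (x^k, λ^k) converges to w^∞. -/
open Matrix Finset

noncomputable section

/-!
The optimality condition of the `x`-step, combined with the extrapolated dual step, says that
`w^{k+1}` solves the variational inequality up to the residual `⟨w - w^{k+1}, H(w^k - w^{k+1})⟩`.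
Testing this against a solution `w*` and using that `J` is skew-affine gives the Fejér inequality
`‖w^{k+1} - w*‖²_H + ‖w^k - w^{k+1}‖²_H ≤ ‖w^k - w*‖²_H`, where `‖·‖_H` is a norm because `Q` is
positive definite. Hence the iterates are bounded and their steps tend to zero, so a cluster point
exists and, `θ` being continuous on the closed set `X`, it solves the variational inequality.
Fejér monotonicity with respect to that cluster point then forces convergence of the whole sequence.
-/

open Filter Topology

lemma nonneg_of_forall_add_mul_nonneg {a c : ℝ} (h : ∀ t : ℝ, 0 < t → t ≤ 1 → 0 ≤ a + t * c) :
    0 ≤ a := by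
  have hlim : Tendsto (fun t : ℝ => a + t * c) (𝓝[>] 0) (𝓝 a) := by
    have : Continuous fun t : ℝ => a + t * c := by fun_prop
    simpa using (this.tendsto 0).mono_left nhdsWithin_le_nhds
  refine ge_of_tendsto hlim ?_
  filter_upwards [Ioc_mem_nhdsGT one_pos] with t ht using h t ht.1 ht.2

lemma exists_pos_mul_sq_norm_le {E : Type*} [NormedAddCommGroup E] [NormedSpace ℝ E]
    [ProperSpace E] {f : E → ℝ} (hf : Continuous f) (hpos : ∀ v, v ≠ 0 → 0 < f v)
    (hhom : ∀ (t : ℝ) (v : E), f (t • v) = t ^ 2 * f v) :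
    ∃ c, 0 < c ∧ ∀ v, c * ‖v‖ ^ 2 ≤ f v := by
  have hf0 : f 0 = 0 := by simpa using hhom 0 0
  rcases subsingleton_or_nontrivial E with hE | hE
  · exact ⟨1, one_pos, fun v => by simp [Subsingleton.elim v 0, hf0]⟩
  obtain ⟨u, hu, hmin⟩ := (isCompact_sphere (0 : E) 1).exists_isMinOn
    (NormedSpace.sphere_nonempty.2 zero_le_one) hf.continuousOn
  refine ⟨f u, hpos u (ne_zero_of_mem_unit_sphere ⟨u, hu⟩), fun v => ?_⟩
  rcases eq_or_ne v 0 with rfl | hv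
  · simp [hf0]
  have hnv : ‖v‖ ≠ 0 := norm_ne_zero_iff.2 hv
  have hunit : ‖v‖⁻¹ • v ∈ Metric.sphere (0 : E) 1 := by
    simp [norm_smul, hnv]
  calc f u * ‖v‖ ^ 2 ≤ f (‖v‖⁻¹ • v) * ‖v‖ ^ 2 := by gcongr; exact hmin hunit
    _ = f v := by rw [hhom]; field_simp

lemma Matrix.IsSymm.dotProduct_mulVec_comm {ι R : Type*} [Fintype ι] [CommSemiring R]
    {M : Matrix ι ι R} (hM : M.IsSymm) (u v : ι → R) :
    u ⬝ᵥ (M *ᵥ v) = v ⬝ᵥ (M *ᵥ u) := by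
  rw [dotProduct_mulVec, ← mulVec_transpose, hM.eq, dotProduct_comm]

lemma optimality_of_isMinOn_add_quadratic {ι : Type*} [Fintype ι] {θ : (ι → ℝ) → ℝ}
    {X : Set (ι → ℝ)} (hθ : ConvexOn ℝ X θ) {M : Matrix ι ι ℝ} (hM : M.IsSymm)
    {c x₀ x₁ : ι → ℝ} (hx₁ : x₁ ∈ X)
    (hmin : IsMinOn (fun z => θ z + (c ⬝ᵥ z + 1 / 2 * ((z - x₀) ⬝ᵥ (M *ᵥ (z - x₀))))) X x₁)
    {z : ι → ℝ} (hz : z ∈ X) :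
    0 ≤ θ z - θ x₁ + (z - x₁) ⬝ᵥ (c + M *ᵥ (x₁ - x₀)) := by
  set d := z - x₁
  refine nonneg_of_forall_add_mul_nonneg (c := 1 / 2 * (d ⬝ᵥ (M *ᵥ d))) fun t ht0 ht1 => ?_
  have hseg : x₁ + t • d = (1 - t) • x₁ + t • z := by simp only [d]; module
  have hmem : x₁ + t • d ∈ X := hseg ▸ hθ.1 hx₁ hz (by linarith) ht0.le (by ring)
  have hconv : θ (x₁ + t • d) ≤ (1 - t) * θ x₁ + t * θ z := by
    simpa [hseg] using hθ.2 hx₁ hz (by linarith : 0 ≤ 1 - t) ht0.le (by ring)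
  have hobj := isMinOn_iff.1 hmin _ hmem
  have hshift : x₁ + t • d - x₀ = (x₁ - x₀) + t • d := by abel
  rw [hshift] at hobj
  simp only [dotProduct_add, add_dotProduct, mulVec_add, mulVec_smul, dotProduct_smul,
    smul_dotProduct, smul_eq_mul, hM.dotProduct_mulVec_comm d, dotProduct_comm d c] at hobj ⊢
  refine (mul_nonneg_iff_of_pos_left ht0).1 ?_
  linarith

section Fejer

variable {E : Type*} [NormedAddCommGroup E] {q : E → ℝ} {c : ℝ}

lemma tendsto_zero_of_mul_sq_norm_le {ι : Type*} {l : Filter ι} {v : ι → E} (hc : 0 < c)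
    (hq : ∀ v, c * ‖v‖ ^ 2 ≤ q v) (h : Tendsto (fun i => q (v i)) l (𝓝 0)) :
    Tendsto v l (𝓝 0) := by
  refine squeeze_zero_norm (fun i => Real.le_sqrt_of_sq_le ?_)
    (by simpa using (h.div_const c).sqrt)
  rw [le_div_iff₀ hc]
  linarith [hq (v i)]

variable {w : ℕ → E} {s : E}

lemma antitone_of_fejer (hc : 0 < c) (hq : ∀ v, c * ‖v‖ ^ 2 ≤ q v)
    (hs : ∀ k, q (w (k + 1) - s) + q (w k - w (k + 1)) ≤ q (w k - s)) :
    Antitone fun k => q (w k - s) :=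
  antitone_nat_of_succ_le fun k => by
    nlinarith [hs k, hq (w k - w (k + 1)), sq_nonneg ‖w k - w (k + 1)‖]

lemma tendsto_sub_succ_of_fejer (hc : 0 < c) (hq : ∀ v, c * ‖v‖ ^ 2 ≤ q v)
    (hs : ∀ k, q (w (k + 1) - s) + q (w k - w (k + 1)) ≤ q (w k - s)) :
    Tendsto (fun k => w k - w (k + 1)) atTop (𝓝 0) := by
  have hnonneg : ∀ v, 0 ≤ q v := fun v => le_trans (by positivity) (hq v)
  have hlim := tendsto_atTop_ciInf (antitone_of_fejer hc hq hs)
    ⟨0, Set.forall_mem_range.2 fun k => hnonneg _⟩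
  refine tendsto_zero_of_mul_sq_norm_le hc hq (squeeze_zero (fun k => hnonneg _)
    (fun k => le_sub_iff_add_le'.2 (hs k)) ?_)
  simpa using hlim.sub (hlim.comp (tendsto_add_atTop_nat 1))

lemma exists_subseq_tendsto_of_fejer [ProperSpace E] (hc : 0 < c)
    (hq : ∀ v, c * ‖v‖ ^ 2 ≤ q v)
    (hs : ∀ k, q (w (k + 1) - s) + q (w k - w (k + 1)) ≤ q (w k - s)) :
    ∃ w' : E, ∃ φ : ℕ → ℕ, StrictMono φ ∧ Tendsto (w ∘ φ) atTop (𝓝 w') ∧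
      Tendsto (fun j => w (φ j + 1)) atTop (𝓝 w') := by
  have hball : ∀ k, w k ∈ Metric.closedBall s √(q (w 0 - s) / c) := fun k => by
    rw [Metric.mem_closedBall, dist_eq_norm]
    refine Real.le_sqrt_of_sq_le ((le_div_iff₀ hc).2 ?_)
    linarith [hq (w k - s), antitone_of_fejer hc hq hs (Nat.zero_le k)]
  obtain ⟨w', -, φ, hφ, hlim⟩ := tendsto_subseq_of_bounded Metric.isBounded_closedBall hball
  refine ⟨w', φ, hφ, hlim, ?_⟩
  have hstep := (tendsto_sub_succ_of_fejer hc hq hs).comp hφ.tendsto_atTop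
  simpa using hlim.sub hstep

lemma tendsto_of_fejer_of_subseq (hc : 0 < c) (hq : ∀ v, c * ‖v‖ ^ 2 ≤ q v)
    (hq₀ : Tendsto q (𝓝 0) (𝓝 0)) (hanti : Antitone fun k => q (w k - s)) {φ : ℕ → ℕ}
    (hφ : Tendsto φ atTop atTop) (hlim : Tendsto (w ∘ φ) atTop (𝓝 s)) :
    Tendsto w atTop (𝓝 s) := by
  have hlimq := tendsto_atTop_ciInf hanti
    ⟨0, Set.forall_mem_range.2 fun k => le_trans (by positivity) (hq _)⟩
  have hsub : Tendsto (fun j => q (w (φ j) - s)) atTop (𝓝 0) :=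
    hq₀.comp (tendsto_sub_nhds_zero_iff.2 hlim)
  rw [tendsto_nhds_unique (hlimq.comp hφ) hsub] at hlimq
  exact tendsto_sub_nhds_zero_iff.1 (tendsto_zero_of_mul_sq_norm_le hc hq hlimq)

end Fejer

section

variable {n m : ℕ} {A : Matrix (Fin m) (Fin n) ℝ} {b : Fin m → ℝ} {Q : Matrix (Fin n) (Fin n) ℝ}
  {r : ℝ}

lemma Hbil_eq (w₁ w₂ : (Fin n → ℝ) × (Fin m → ℝ)) :
    Hbil A Q r w₁ w₂ = r * ((A *ᵥ w₁.1) ⬝ᵥ (A *ᵥ w₂.1)) + w₁.1 ⬝ᵥ (Q *ᵥ w₂.1)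
      + w₂.2 ⬝ᵥ (A *ᵥ w₁.1) + w₁.2 ⬝ᵥ (A *ᵥ w₂.1) + 1 / r * (w₁.2 ⬝ᵥ w₂.2) := by
  simp only [Hbil, add_mulVec, smul_mulVec, ← mulVec_mulVec, dotProduct_add, dotProduct_smul,
    dotProduct_transpose_mulVec, smul_eq_mul, dotProduct_comm (A *ᵥ w₂.1) (A *ᵥ w₁.1)]

lemma HnormSq_eq (hr : r ≠ 0) (w : (Fin n → ℝ) × (Fin m → ℝ)) :
    HnormSq A Q r w =
      r * ((A *ᵥ w.1 + r⁻¹ • w.2) ⬝ᵥ (A *ᵥ w.1 + r⁻¹ • w.2)) + w.1 ⬝ᵥ (Q *ᵥ w.1) := by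
  rw [HnormSq, Hbil_eq]
  simp only [dotProduct_add, add_dotProduct, smul_dotProduct, dotProduct_smul, smul_eq_mul,
    dotProduct_comm (A *ᵥ w.1) w.2]
  field_simp
  ring

lemma HnormSq_pos (hr : 0 < r) (hQ : Q.PosDef) {w : (Fin n → ℝ) × (Fin m → ℝ)} (hw : w ≠ 0) :
    0 < HnormSq A Q r w := by
  rw [HnormSq_eq hr.ne']
  rcases eq_or_ne w.1 0 with h₁ | h₁
  · have h₂ : w.2 ≠ 0 := fun h₂ => hw (Prod.ext h₁ h₂)
    have := dotProduct_star_self_pos_iff.2 (smul_ne_zero (inv_ne_zero hr.ne') h₂)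
    simp only [star_trivial] at this
    simpa [h₁] using mul_pos hr this
  · have hQpos := hQ.dotProduct_mulVec_pos h₁
    have hsq := dotProduct_star_self_nonneg (A *ᵥ w.1 + r⁻¹ • w.2)
    simp only [star_trivial] at hQpos hsq
    positivity

lemma HnormSq_smul (t : ℝ) (w : (Fin n → ℝ) × (Fin m → ℝ)) :
    HnormSq A Q r (t • w) = t ^ 2 * HnormSq A Q r w := by
  simp only [HnormSq, Hbil, Prod.smul_fst, Prod.smul_snd, mulVec_smul, smul_dotProduct,
    dotProduct_smul, smul_eq_mul]
  ring

lemma continuous_HnormSq : Continuous (HnormSq (n := n) (m := m) A Q r) := by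
  unfold HnormSq Hbil
  fun_prop

lemma exists_pos_mul_sq_norm_le_HnormSq (hr : 0 < r) (hQ : Q.PosDef) :
    ∃ c, 0 < c ∧ ∀ w : (Fin n → ℝ) × (Fin m → ℝ), c * ‖w‖ ^ 2 ≤ HnormSq A Q r w :=
  exists_pos_mul_sq_norm_le continuous_HnormSq (fun _ => HnormSq_pos hr hQ) HnormSq_smul

lemma Hbil_neg_left (u v : (Fin n → ℝ) × (Fin m → ℝ)) :
    Hbil A Q r (-u) v = -Hbil A Q r u v := by
  simp only [Hbil, Prod.fst_neg, Prod.snd_neg, neg_dotProduct]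
  ring

lemma HnormSq_add (hQ : Q.IsSymm) (u v : (Fin n → ℝ) × (Fin m → ℝ)) :
    HnormSq A Q r (u + v) = HnormSq A Q r u + HnormSq A Q r v + 2 * Hbil A Q r u v := by
  simp only [HnormSq, Hbil_eq, Prod.fst_add, Prod.snd_add, mulVec_add, dotProduct_add,
    add_dotProduct, hQ.dotProduct_mulVec_comm v.1 u.1, dotProduct_comm (A *ᵥ v.1) (A *ᵥ u.1),
    dotProduct_comm v.2 (A *ᵥ u.1), dotProduct_comm v.2 u.2]
  ring


lemma pdot_Jmap_skew (u v : (Fin n → ℝ) × (Fin m → ℝ)) :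
    pdot (v - u) (Jmap A b u) + pdot (u - v) (Jmap A b v) = 0 := by
  simp only [pdot, Jmap, Prod.fst_sub, Prod.snd_sub, dotProduct_neg, dotProduct_sub,
    sub_dotProduct, mulVec_sub, dotProduct_transpose_mulVec, dotProduct_comm u.2,
    dotProduct_comm v.2]
  ring

lemma palm_objective_eq (t : ℝ) (lam : Fin m → ℝ) (x₀ z : Fin n → ℝ) :
    t - lam ⬝ᵥ (A *ᵥ z - b) + r / 2 * ((A *ᵥ (z - x₀)) ⬝ᵥ (A *ᵥ (z - x₀)))
        + 1 / 2 * ((z - x₀) ⬝ᵥ (Q *ᵥ (z - x₀)))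
      = t + (-(Aᵀ *ᵥ lam) ⬝ᵥ z + 1 / 2 * ((z - x₀) ⬝ᵥ ((r • (Aᵀ * A) + Q) *ᵥ (z - x₀))))
        + lam ⬝ᵥ b := by
  simp only [add_mulVec, smul_mulVec, ← mulVec_mulVec, dotProduct_add, dotProduct_smul,
    neg_dotProduct, dotProduct_sub, smul_eq_mul, dotProduct_comm (Aᵀ *ᵥ lam) z,
    dotProduct_transpose_mulVec]
  ring

/- The `λ`-components cancel because the dual step uses the extrapolated point `2x₁ - x₀`. -/
lemma pdot_Jmap_sub_Hbil_palm_step (hr : r ≠ 0) (x₀ x₁ : Fin n → ℝ) (lam₀ : Fin m → ℝ)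
    (w : (Fin n → ℝ) × (Fin m → ℝ)) :
    let w₁ := (x₁, lam₀ - r • (A *ᵥ ((2 : ℝ) • x₁ - x₀) - b))
    pdot (w - w₁) (Jmap A b w₁) - Hbil A Q r (w - w₁) ((x₀, lam₀) - w₁)
      = (w.1 - x₁) ⬝ᵥ (-(Aᵀ *ᵥ lam₀) + (r • (Aᵀ * A) + Q) *ᵥ (x₁ - x₀)) := by
  simp only [Hbil, pdot, Jmap, Prod.fst_sub, Prod.snd_sub, Prod.mk_sub_mk, mulVec_sub,
    mulVec_smul, add_mulVec, smul_mulVec, ← mulVec_mulVec, dotProduct_sub, sub_dotProduct,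
    dotProduct_add, dotProduct_smul, smul_dotProduct, dotProduct_neg, smul_eq_mul,
    dotProduct_transpose_mulVec, sub_sub_cancel]
  field_simp
  ring

lemma solPoint_of_tendsto {ι : Type*} {l : Filter ι} [l.NeBot] {θ : (Fin n → ℝ) → ℝ}
    {X : Set (Fin n → ℝ)} (hX : IsClosed X) (hθ : ContinuousOn θ X)
    {u v : ι → (Fin n → ℝ) × (Fin m → ℝ)}
    {w' : (Fin n → ℝ) × (Fin m → ℝ)} (hvX : ∀ i, (v i).1 ∈ X)
    (hvi : ∀ i w, w.1 ∈ X → Hbil A Q r (w - v i) (u i - v i)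
      ≤ θ w.1 - θ (v i).1 + pdot (w - v i) (Jmap A b (v i)))
    (hu : Tendsto u l (𝓝 w')) (hv : Tendsto v l (𝓝 w')) :
    SolPoint θ X A b w' := by
  have hv₁ : Tendsto (fun i => (v i).1) l (𝓝 w'.1) := (continuous_fst.tendsto _).comp hv
  have hmem : w'.1 ∈ X := hX.mem_of_tendsto hv₁ (Eventually.of_forall hvX)
  refine ⟨hmem, fun w hw => ?_⟩
  have hθlim : Tendsto (fun i => θ (v i).1) l (𝓝 (θ w'.1)) :=
    (hθ w'.1 hmem).tendsto.comp (tendsto_nhdsWithin_iff.2 ⟨hv₁, Eventually.of_forall hvX⟩)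
  have hHcont : Continuous fun p : ((Fin n → ℝ) × (Fin m → ℝ)) × ((Fin n → ℝ) × (Fin m → ℝ)) =>
      Hbil A Q r (w - p.1) (p.2 - p.1) := by
    unfold Hbil
    fun_prop
  have hJcont : Continuous fun p : (Fin n → ℝ) × (Fin m → ℝ) => pdot (w - p) (Jmap A b p) := by
    unfold pdot Jmap
    fun_prop
  have hlim := le_of_tendsto_of_tendsto' ((hHcont.tendsto (w', w')).comp (hv.prodMk_nhds hu))
    ((tendsto_const_nhds.sub hθlim).add ((hJcont.tendsto w').comp hv)) fun i => hvi i w hw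
  simpa [Hbil] using hlim

namespace PALM

variable {θ : (Fin n → ℝ) → ℝ} {X : Set (Fin n → ℝ)} {x : ℕ → Fin n → ℝ}
  {lam : ℕ → Fin m → ℝ}

lemma isMinOn (halg : PALM θ X A b r Q x lam) (k : ℕ) :
    IsMinOn (fun z => θ z + (-(Aᵀ *ᵥ lam k) ⬝ᵥ z
      + 1 / 2 * ((z - x k) ⬝ᵥ ((r • (Aᵀ * A) + Q) *ᵥ (z - x k))))) X (x (k + 1)) :=
  isMinOn_iff.2 fun z hz => by
    have h := (halg.1 k).2 z hz
    rw [palm_objective_eq, palm_objective_eq] at h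
    linarith

lemma prediction (halg : PALM θ X A b r Q x lam) (hθ : ConvexOn ℝ X θ) (hr : r ≠ 0)
    (hQ : Q.IsSymm) (k : ℕ) {w : (Fin n → ℝ) × (Fin m → ℝ)} (hw : w.1 ∈ X) :
    Hbil A Q r (w - (x (k + 1), lam (k + 1))) ((x k, lam k) - (x (k + 1), lam (k + 1)))
      ≤ θ w.1 - θ (x (k + 1))
        + pdot (w - (x (k + 1), lam (k + 1))) (Jmap A b (x (k + 1), lam (k + 1))) := by
  have hAA : (Aᵀ * A).IsSymm := by rw [IsSymm, transpose_mul, transpose_transpose]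
  have hopt := optimality_of_isMinOn_add_quadratic hθ ((hAA.smul r).add hQ) (halg.1 k).1
    (halg.isMinOn k) hw
  have hstep :=
    pdot_Jmap_sub_Hbil_palm_step (A := A) (b := b) (Q := Q) hr (x k) (x (k + 1)) (lam k) w
  rw [halg.2 k]
  linarith

lemma fejer (halg : PALM θ X A b r Q x lam) (hθ : ConvexOn ℝ X θ) (hr : r ≠ 0)
    (hQ : Q.IsSymm) {s : (Fin n → ℝ) × (Fin m → ℝ)} (hs : SolPoint θ X A b s) (k : ℕ) :
    HnormSq A Q r ((x (k + 1), lam (k + 1)) - s)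
        + HnormSq A Q r ((x k, lam k) - (x (k + 1), lam (k + 1)))
      ≤ HnormSq A Q r ((x k, lam k) - s) := by
  set w₀ : (Fin n → ℝ) × (Fin m → ℝ) := (x k, lam k)
  set w₁ : (Fin n → ℝ) × (Fin m → ℝ) := (x (k + 1), lam (k + 1))
  have hpred := halg.prediction hθ hr hQ k hs.1
  have hsol := hs.2 w₁ (halg.1 k).1
  have hskew := pdot_Jmap_skew (A := A) (b := b) w₁ s
  have hexp := HnormSq_add (r := r) (A := A) hQ (w₁ - s) (w₀ - w₁)
  rw [sub_add_sub_cancel', ← neg_sub s w₁, Hbil_neg_left, neg_sub] at hexp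
  linarith

end PALM

end

theorem stmt_7_general (n m : ℕ) (θ : (Fin n → ℝ) → ℝ) (hθ : ConvexOn ℝ Set.univ θ)
    (X : Set (Fin n → ℝ)) (hXclosed : IsClosed X) (hXconvex : Convex ℝ X)
    (hθcont : ContinuousOn θ X)
    (A : Matrix (Fin m) (Fin n) ℝ) (b : Fin m → ℝ) (r : ℝ) (hr : 0 < r)
    (Q : Matrix (Fin n) (Fin n) ℝ) (hQ : Q.PosDef)
    (hsol : ∃ ws : (Fin n → ℝ) × (Fin m → ℝ), SolPoint θ X A b ws)
    (x : ℕ → Fin n → ℝ) (lam : ℕ → Fin m → ℝ) (halg : PALM θ X A b r Q x lam) :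
    ∃ winf : (Fin n → ℝ) × (Fin m → ℝ), SolPoint θ X A b winf ∧
      Filter.Tendsto (fun k : ℕ => ((x k, lam k) : (Fin n → ℝ) × (Fin m → ℝ)))
        Filter.atTop (nhds winf) := by
  obtain ⟨s, hs⟩ := hsol
  have hθX : ConvexOn ℝ X θ := hθ.subset (Set.subset_univ X) hXconvex
  have hQsymm : Q.IsSymm := isHermitian_iff_isSymm.1 hQ.isHermitian
  obtain ⟨c, hc, hcoer⟩ := exists_pos_mul_sq_norm_le_HnormSq (m := m) (A := A) hr hQ
  have hfejer {p} (hp : SolPoint θ X A b p) := halg.fejer hθX hr.ne' hQsymm hp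
  obtain ⟨w', φ, hφ, hlim, hlim₁⟩ :=
    exists_subseq_tendsto_of_fejer (w := fun k => (x k, lam k)) hc hcoer (hfejer hs)
  have hw' : SolPoint θ X A b w' := solPoint_of_tendsto hXclosed hθcont
    (fun j => (halg.1 (φ j)).1) (fun j _ => halg.prediction hθX hr.ne' hQsymm (φ j)) hlim hlim₁
  have hq₀ : Tendsto (HnormSq A Q r) (𝓝 0) (𝓝 0) := by
    simpa [HnormSq, Hbil] using continuous_HnormSq.tendsto (0 : (Fin n → ℝ) × (Fin m → ℝ))
  exact ⟨w', hw', tendsto_of_fejer_of_subseq hc hcoer hq₀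
    (antitone_of_fejer (w := fun k => (x k, lam k)) hc hcoer (hfejer hw')) hφ.tendsto_atTop hlim⟩

/-- Theorem 2.3, convergence of the whole sequence to a solution. -/
theorem stmt_7 (n m : ℕ) (θ : (Fin n → ℝ) → ℝ) (hθ : ConvexOn ℝ Set.univ θ)
    (X : Set (Fin n → ℝ)) (hXne : X.Nonempty) (hXclosed : IsClosed X) (hXconvex : Convex ℝ X)
    (hθcont : ContinuousOn θ X)
    (A : Matrix (Fin m) (Fin n) ℝ) (b : Fin m → ℝ) (r : ℝ) (hr : 0 < r)
    (Q : Matrix (Fin n) (Fin n) ℝ) (hQ : Q.PosDef)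
    (hsol : ∃ ws : (Fin n → ℝ) × (Fin m → ℝ), SolPoint θ X A b ws)
    (x : ℕ → Fin n → ℝ) (lam : ℕ → Fin m → ℝ) (halg : PALM θ X A b r Q x lam) :
    ∃ winf : (Fin n → ℝ) × (Fin m → ℝ), SolPoint θ X A b winf ∧
      Filter.Tendsto (fun k : ℕ => ((x k, lam k) : (Fin n → ℝ) × (Fin m → ℝ)))
        Filter.atTop (nhds winf) :=
  stmt_7_general n m θ hθ X hXclosed hXconvex hθcont A b r hr Q hQ hsol x lam halg
end
end

section
/- Let p ≥ 1, A_i ∈ ℝ^{m×n_i}, r_i > 0, and Q_i ∈ ℝ^{n_i×n_i} symmetric positive definite for i = 1, …, p. Then the quadratic form on (x_1, …, x_p, λ) ∈ ℝ^{n_1} × ⋯ × ℝ^{n_p} × ℝᵐ given by ∑_{i=1}^p ⟨x_i, (r_i A_iᵀA_i + Q_i) x_i⟩ + 2 ∑_{i=1}^p ⟨λ, A_i x_i⟩ + (∑_{j=1}^p 1/r_j) ‖λ‖² equals ∑_{i=1}^p ‖√r_i · A_i x_i + (1/√r_i) · λ‖² + ∑_{i=1}^p ⟨x_i, Q_i x_i⟩,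 and is strictly positive whenever (x_1, …, x_p, λ) ≠ 0; that is, the block matrix H with (i,i) blocks r_i A_iᵀA_i + Q_i, (i, p+1) blocks A_iᵀ, (p+1, i) blocks A_i, and (p+1, p+1) block (∑_{j=1}^p 1/r_j) I_m is symmetric positive definite. -/
/-! Each block contributes `‖√rᵢ Aᵢxᵢ + λ/√rᵢ‖² = rᵢ‖Aᵢxᵢ‖² + 2⟨λ, Aᵢxᵢ⟩ + ‖λ‖²/rᵢ`, and summing these
over `i` reproduces every term of the form except `∑ᵢ ⟨xᵢ, Qᵢxᵢ⟩`. That remainder is positive as soon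
as some `xᵢ ≠ 0`; when all `xᵢ` vanish the form reduces to `(∑ⱼ 1/rⱼ)‖λ‖² > 0`. -/

open Matrix Finset

theorem sqrt_smul_add_inv_sqrt_smul_dotProduct_self {n : Type*} [Fintype n] {r : ℝ} (hr : 0 < r)
    (u v : n → ℝ) :
    (√r • u + (1 / √r) • v) ⬝ᵥ (√r • u + (1 / √r) • v) =
      r * (u ⬝ᵥ u) + 2 * (v ⬝ᵥ u) + 1 / r * (v ⬝ᵥ v) := by
  have : 0 < √r := Real.sqrt_pos.2 hr
  conv_rhs => rw [← Real.sq_sqrt hr.le]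
  simp only [dotProduct_add, add_dotProduct, dotProduct_smul, smul_dotProduct, smul_eq_mul,
    dotProduct_comm u v]
  field_simp
  ring

theorem dotProduct_smul_transpose_mul_self_add_mulVec {R m n : Type*} [CommRing R] [Fintype m]
    [Fintype n] (c : R) (A : Matrix m n R) (Q : Matrix n n R) (x : n → R) :
    x ⬝ᵥ ((c • (Aᵀ * A) + Q) *ᵥ x) = c * ((A *ᵥ x) ⬝ᵥ (A *ᵥ x)) + x ⬝ᵥ (Q *ᵥ x) := by
  rw [add_mulVec, dotProduct_add, smul_mulVec, dotProduct_smul, smul_eq_mul, ← mulVec_mulVec,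
    dotProduct_mulVec, vecMul_transpose]

theorem sum_dotProduct_mulVec_pos {ι : Type*} [Fintype ι] {n : ι → Type*} [∀ i, Fintype (n i)]
    {Q : ∀ i, Matrix (n i) (n i) ℝ} (hQ : ∀ i, (Q i).PosDef) {x : ∀ i, n i → ℝ} (hx : x ≠ 0) :
    0 < ∑ i, x i ⬝ᵥ (Q i *ᵥ x i) := by
  obtain ⟨j, hj⟩ := Function.ne_iff.1 hx
  refine sum_pos' (fun i _ => ?_) ⟨j, mem_univ j, ?_⟩
  · simpa using (hQ i).posSemidef.dotProduct_mulVec_nonneg (x i)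
  · simpa using (hQ j).dotProduct_mulVec_pos hj

section BlockQuadForm

variable {ι m : Type*} [Fintype ι] [Fintype m] {n : ι → Type*} [∀ i, Fintype (n i)]

/-- `⟨(x, λ), H (x, λ)⟩` for the block matrix `H` with diagonal blocks `rᵢAᵢᵀAᵢ + Qᵢ`, off-diagonal
blocks `Aᵢᵀ`, `Aᵢ` and lower-right block `(∑ⱼ 1/rⱼ) I`. -/
noncomputable def blockQuadForm (A : ∀ i, Matrix m (n i) ℝ) (r : ι → ℝ) (Q : ∀ i, Matrix (n i) (n i) ℝ)
    (x : ∀ i, n i → ℝ) (lam : m → ℝ) : ℝ :=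
  (∑ i, x i ⬝ᵥ ((r i • ((A i)ᵀ * A i) + Q i) *ᵥ x i))
    + 2 * (∑ i, lam ⬝ᵥ (A i *ᵥ x i)) + (∑ j, 1 / r j) * (lam ⬝ᵥ lam)

theorem blockQuadForm_eq_sum_dotProduct_self_add (A : ∀ i, Matrix m (n i) ℝ) {r : ι → ℝ}
    (hr : ∀ i, 0 < r i) (Q : ∀ i, Matrix (n i) (n i) ℝ) (x : ∀ i, n i → ℝ) (lam : m → ℝ) :
    blockQuadForm A r Q x lam =
      (∑ i, (√(r i) • (A i *ᵥ x i) + (1 / √(r i)) • lam) ⬝ᵥ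
          (√(r i) • (A i *ᵥ x i) + (1 / √(r i)) • lam))
        + ∑ i, x i ⬝ᵥ (Q i *ᵥ x i) := by
  simp only [blockQuadForm, dotProduct_smul_transpose_mul_self_add_mulVec,
    sqrt_smul_add_inv_sqrt_smul_dotProduct_self (hr _), sum_add_distrib, sum_mul, mul_sum]
  ring

theorem blockQuadForm_pos [Nonempty ι] (A : ∀ i, Matrix m (n i) ℝ) {r : ι → ℝ}
    (hr : ∀ i, 0 < r i) {Q : ∀ i, Matrix (n i) (n i) ℝ} (hQ : ∀ i, (Q i).PosDef)
    {x : ∀ i, n i → ℝ} {lam : m → ℝ} (hne : (x, lam) ≠ 0) :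
    0 < blockQuadForm A r Q x lam := by
  rcases eq_or_ne x 0 with rfl | hx
  · have hlam : lam ≠ 0 := by rintro rfl; exact hne rfl
    have hlam_pos : 0 < lam ⬝ᵥ lam := by simpa using dotProduct_star_self_pos_iff.2 hlam
    simpa [blockQuadForm] using
      mul_pos (sum_pos (fun i _ => one_div_pos.2 (hr i)) univ_nonempty) hlam_pos
  · rw [blockQuadForm_eq_sum_dotProduct_self_add A hr]
    exact add_pos_of_nonneg_of_pos
      (sum_nonneg fun i _ => sum_nonneg fun j _ => mul_self_nonneg _)
      (sum_dotProduct_mulVec_pos hQ hx)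

end BlockQuadForm

/-- The quadratic form of the multi-block matrix `H` (with diagonal blocks
`rᵢAᵢᵀAᵢ + Qᵢ`, off-diagonal blocks `Aᵢᵀ`/`Aᵢ` and lower-right block `(∑ⱼ 1/rⱼ)I_m`) equals
`∑ᵢ ‖√rᵢ·Aᵢxᵢ + (1/√rᵢ)·λ‖² + ∑ᵢ ⟨xᵢ, Qᵢxᵢ⟩`, and is strictly positive off the origin, i.e.
`H` is symmetric positive definite. -/
theorem stmt_14 (p m : ℕ) (hp : 1 ≤ p) (nd : Fin p → ℕ)
    (A : ∀ i : Fin p, Matrix (Fin m) (Fin (nd i)) ℝ)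
    (r : Fin p → ℝ) (hr : ∀ i, 0 < r i)
    (Q : ∀ i : Fin p, Matrix (Fin (nd i)) (Fin (nd i)) ℝ) (hQ : ∀ i, (Q i).PosDef) :
    (∀ (x : ∀ i : Fin p, Fin (nd i) → ℝ) (lam : Fin m → ℝ),
        (∑ i, x i ⬝ᵥ ((r i • ((A i)ᵀ * A i) + Q i) *ᵥ x i))
            + 2 * (∑ i, lam ⬝ᵥ (A i *ᵥ x i)) + (∑ j, 1 / r j) * (lam ⬝ᵥ lam) =
          (∑ i, (Real.sqrt (r i) • (A i *ᵥ x i) + (1 / Real.sqrt (r i)) • lam) ⬝ᵥ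
              (Real.sqrt (r i) • (A i *ᵥ x i) + (1 / Real.sqrt (r i)) • lam))
            + ∑ i, x i ⬝ᵥ (Q i *ᵥ x i)) ∧
      (∀ (x : ∀ i : Fin p, Fin (nd i) → ℝ) (lam : Fin m → ℝ), (x, lam) ≠ 0 →
        0 < (∑ i, x i ⬝ᵥ ((r i • ((A i)ᵀ * A i) + Q i) *ᵥ x i))
            + 2 * (∑ i, lam ⬝ᵥ (A i *ᵥ x i)) + (∑ j, 1 / r j) * (lam ⬝ᵥ lam)) := by
  have : Nonempty (Fin p) := ⟨⟨0, hp⟩⟩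
  exact ⟨fun x lam => blockQuadForm_eq_sum_dotProduct_self_add A hr Q x lam,
    fun x lam hne => blockQuadForm_pos A hr hQ hne⟩
end

section
/- Let p ≥ 1, A_i ∈ ℝ^{m×n_i}, r_i > 0, s_i > 0, and let Q_i ∈ ℝ^{n_i×n_i} be symmetric matrices with Q_i − r_i A_iᵀA_i positive semidefinite for i = 1, …, p. Then the block matrix H with (i,i) blocks Q_i + s_i I_{n_i}, (i, p+1) blocks −A_iᵀ, (p+1, i) blocks −A_i, and (p+1, p+1) block (∑_{j=1}^p 1/r_j) I_m is symmetric positive definite; more precisely, for every w = (x_1, …, x_p, λ) ≠ 0, ⟨w, Hw⟩ ≥ ∑_{i=1}^p ‖√r_i · A_i x_i − (1/√r_i) · λ‖² + ∑_{i=1}^p s_i ‖x_i‖² > 0. -/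
open Matrix Finset

/-!
Each block contributes a completed square: writing `vᵢ = Aᵢxᵢ`,
`‖√rᵢ vᵢ − λ/√rᵢ‖² = rᵢ‖vᵢ‖² − 2⟨λ, vᵢ⟩ + ‖λ‖²/rᵢ`, and `rᵢ‖vᵢ‖² ≤ ⟨xᵢ, Qᵢxᵢ⟩` is exactly the
semidefiniteness of `Qᵢ − rᵢAᵢᵀAᵢ`. Summing over `i` distributes the `(∑ⱼ 1/rⱼ)‖λ‖²` term over the
blocks and gives the inequality. The lower bound is positive: if some `xᵢ ≠ 0` then
`sᵢ‖xᵢ‖² > 0`, and otherwise `λ ≠ 0` and every square equals `‖λ‖²/rᵢ > 0`.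
-/

section DotProduct

variable {n m : Type*} [Fintype n] [Fintype m]

lemma dotProduct_self_nonneg (v : n → ℝ) : 0 ≤ v ⬝ᵥ v :=
  Finset.sum_nonneg fun i _ => mul_self_nonneg (v i)

lemma dotProduct_self_pos {v : n → ℝ} (hv : v ≠ 0) : 0 < v ⬝ᵥ v :=
  (dotProduct_self_nonneg v).lt_of_ne' (dotProduct_self_eq_zero.not.mpr hv)

lemma dotProduct_sqrt_smul_sub_inv_sqrt_smul_self {r : ℝ} (hr : 0 < r) (v w : n → ℝ) :
    (√r • v - (1 / √r) • w) ⬝ᵥ (√r • v - (1 / √r) • w)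
      = r * (v ⬝ᵥ v) - 2 * (w ⬝ᵥ v) + 1 / r * (w ⬝ᵥ w) := by
  have hsqrt : √r ≠ 0 := Real.sqrt_ne_zero'.mpr hr
  simp only [dotProduct_sub, sub_dotProduct, smul_dotProduct, dotProduct_smul, smul_eq_mul,
    dotProduct_comm v w]
  field_simp
  rw [Real.sq_sqrt hr.le]
  ring

lemma dotProduct_add_smul_one_mulVec [DecidableEq n] (Q : Matrix n n ℝ) (s : ℝ) (x : n → ℝ) :
    x ⬝ᵥ ((Q + s • (1 : Matrix n n ℝ)) *ᵥ x) = x ⬝ᵥ (Q *ᵥ x) + s * (x ⬝ᵥ x) := by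
  rw [add_mulVec, dotProduct_add, smul_mulVec, one_mulVec, dotProduct_smul, smul_eq_mul]

lemma Matrix.PosSemidef.mul_dotProduct_mulVec_self_le {A : Matrix m n ℝ} {Q : Matrix n n ℝ}
    {r : ℝ} (hQ : (Q - r • (Aᵀ * A)).PosSemidef) (x : n → ℝ) :
    r * ((A *ᵥ x) ⬝ᵥ (A *ᵥ x)) ≤ x ⬝ᵥ (Q *ᵥ x) := by
  have hAx : x ⬝ᵥ ((Aᵀ * A) *ᵥ x) = (A *ᵥ x) ⬝ᵥ (A *ᵥ x) := by
    rw [← mulVec_mulVec, dotProduct_mulVec, vecMul_transpose]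
  have h := hQ.dotProduct_mulVec_nonneg x
  rw [star_trivial, sub_mulVec, dotProduct_sub, smul_mulVec, dotProduct_smul, hAx,
    smul_eq_mul, sub_nonneg] at h
  exact h

lemma completedSquare_add_le_blockForm [DecidableEq n] {A : Matrix m n ℝ} {Q : Matrix n n ℝ} {r : ℝ}
    (hr : 0 < r) (hQ : (Q - r • (Aᵀ * A)).PosSemidef) (s : ℝ) (x : n → ℝ) (lam : m → ℝ) :
    (√r • (A *ᵥ x) - (1 / √r) • lam) ⬝ᵥ (√r • (A *ᵥ x) - (1 / √r) • lam) + s * (x ⬝ᵥ x)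
      ≤ x ⬝ᵥ ((Q + s • (1 : Matrix n n ℝ)) *ᵥ x) - 2 * (lam ⬝ᵥ (A *ᵥ x))
          + 1 / r * (lam ⬝ᵥ lam) := by
  rw [dotProduct_sqrt_smul_sub_inv_sqrt_smul_self hr, dotProduct_add_smul_one_mulVec]
  linarith [hQ.mul_dotProduct_mulVec_self_le x]

end DotProduct

lemma sum_dotProduct_self_add_sum_mul_dotProduct_self_pos {ι m : Type*} [Fintype ι] [Fintype m]
    {d : ι → Type*} [∀ i, Fintype (d i)] (u : ι → m → ℝ) (x : ∀ i, d i → ℝ) {s : ι → ℝ}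
    (hs : ∀ i, 0 < s i) (h : (∃ i, u i ≠ 0) ∨ ∃ i, x i ≠ 0) :
    0 < ∑ i, u i ⬝ᵥ u i + ∑ i, s i * (x i ⬝ᵥ x i) := by
  have hu : ∀ i ∈ univ, 0 ≤ u i ⬝ᵥ u i := fun i _ => dotProduct_self_nonneg (u i)
  have hx : ∀ i ∈ univ, 0 ≤ s i * (x i ⬝ᵥ x i) :=
    fun i _ => mul_nonneg (hs i).le (dotProduct_self_nonneg (x i))
  rcases h with ⟨i, hi⟩ | ⟨i, hi⟩
  · exact add_pos_of_pos_of_nonneg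
      ((dotProduct_self_pos hi).trans_le (single_le_sum hu (mem_univ i))) (sum_nonneg hx)
  · exact add_pos_of_nonneg_of_pos (sum_nonneg hu)
      ((mul_pos (hs i) (dotProduct_self_pos hi)).trans_le (single_le_sum hx (mem_univ i)))

theorem stmt_16_general (p m : ℕ) (hp : 1 ≤ p) (nd : Fin p → ℕ)
    (A : ∀ i : Fin p, Matrix (Fin m) (Fin (nd i)) ℝ)
    (r : Fin p → ℝ) (hr : ∀ i, 0 < r i) (s : Fin p → ℝ) (hs : ∀ i, 0 < s i)
    (Q : ∀ i : Fin p, Matrix (Fin (nd i)) (Fin (nd i)) ℝ)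
    (hQpsd : ∀ i, (Q i - r i • ((A i)ᵀ * A i)).PosSemidef) :
    ∀ (x : ∀ i : Fin p, Fin (nd i) → ℝ) (lam : Fin m → ℝ), (x, lam) ≠ 0 →
      ((∑ i, x i ⬝ᵥ ((Q i + s i • (1 : Matrix (Fin (nd i)) (Fin (nd i)) ℝ)) *ᵥ x i))
          - 2 * (∑ i, lam ⬝ᵥ (A i *ᵥ x i)) + (∑ j, 1 / r j) * (lam ⬝ᵥ lam) ≥
        (∑ i, (Real.sqrt (r i) • (A i *ᵥ x i) - (1 / Real.sqrt (r i)) • lam) ⬝ᵥ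
            (Real.sqrt (r i) • (A i *ᵥ x i) - (1 / Real.sqrt (r i)) • lam))
          + ∑ i, s i * (x i ⬝ᵥ x i)) ∧
      (0 < (∑ i, x i ⬝ᵥ ((Q i + s i • (1 : Matrix (Fin (nd i)) (Fin (nd i)) ℝ)) *ᵥ x i))
          - 2 * (∑ i, lam ⬝ᵥ (A i *ᵥ x i)) + (∑ j, 1 / r j) * (lam ⬝ᵥ lam)) := by
  intro x lam hne
  have hle := sum_le_sum fun i (_ : i ∈ univ) =>
    completedSquare_add_le_blockForm (hr i) (hQpsd i) (s i) (x i) lam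
  rw [sum_add_distrib, sum_add_distrib, sum_sub_distrib, ← mul_sum, ← sum_mul] at hle
  refine ⟨hle, lt_of_lt_of_le ?_ hle⟩
  apply sum_dotProduct_self_add_sum_mul_dotProduct_self_pos _ _ hs
  by_cases hx : x = 0
  · have hlam : lam ≠ 0 := fun hlam => hne (by rw [hx, hlam]; rfl)
    refine Or.inl ⟨⟨0, hp⟩, ?_⟩
    rw [hx, Pi.zero_apply, mulVec_zero, smul_zero, zero_sub, neg_ne_zero]
    exact smul_ne_zero (one_div_ne_zero (Real.sqrt_ne_zero'.mpr (hr _))) hlam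
  · exact Or.inr (Function.ne_iff.mp hx)

/-- With `rᵢ, sᵢ > 0` and `Qᵢ` symmetric with `Qᵢ − rᵢAᵢᵀAᵢ` positive
semidefinite, the quadratic form of the block matrix `H` (diagonal blocks `Qᵢ + sᵢI`,
off-diagonal blocks `−Aᵢᵀ`/`−Aᵢ`, lower-right block `(∑ⱼ 1/rⱼ)I_m`) satisfies
`⟨w, Hw⟩ ≥ ∑ᵢ ‖√rᵢ·Aᵢxᵢ − (1/√rᵢ)·λ‖² + ∑ᵢ sᵢ‖xᵢ‖² > 0` for every `w ≠ 0`; in particular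
`H` is symmetric positive definite. -/
theorem stmt_16 (p m : ℕ) (hp : 1 ≤ p) (nd : Fin p → ℕ)
    (A : ∀ i : Fin p, Matrix (Fin m) (Fin (nd i)) ℝ)
    (r : Fin p → ℝ) (hr : ∀ i, 0 < r i) (s : Fin p → ℝ) (hs : ∀ i, 0 < s i)
    (Q : ∀ i : Fin p, Matrix (Fin (nd i)) (Fin (nd i)) ℝ)
    (hQsymm : ∀ i, (Q i).IsHermitian)
    (hQpsd : ∀ i, (Q i - r i • ((A i)ᵀ * A i)).PosSemidef) :
    ∀ (x : ∀ i : Fin p, Fin (nd i) → ℝ) (lam : Fin m → ℝ), (x, lam) ≠ 0 →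
      ((∑ i, x i ⬝ᵥ ((Q i + s i • (1 : Matrix (Fin (nd i)) (Fin (nd i)) ℝ)) *ᵥ x i))
          - 2 * (∑ i, lam ⬝ᵥ (A i *ᵥ x i)) + (∑ j, 1 / r j) * (lam ⬝ᵥ lam) ≥
        (∑ i, (Real.sqrt (r i) • (A i *ᵥ x i) - (1 / Real.sqrt (r i)) • lam) ⬝ᵥ
            (Real.sqrt (r i) • (A i *ᵥ x i) - (1 / Real.sqrt (r i)) • lam))
          + ∑ i, s i * (x i ⬝ᵥ x i)) ∧
      (0 < (∑ i, x i ⬝ᵥ ((Q i + s i • (1 : Matrix (Fin (nd i)) (Fin (nd i)) ℝ)) *ᵥ x i))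
          - 2 * (∑ i, lam ⬝ᵥ (A i *ᵥ x i)) + (∑ j, 1 / r j) * (lam ⬝ᵥ lam)) :=
  stmt_16_general p m hp nd A r hr s hs Q hQpsd
end
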